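/- (Strong law for the storage volume, finite capacity.) Assume p_0 > 0 and p_0 + p_1 < 1, and let π be the unique stationary probability distribution of the transition matrix P. Then, for any distribution of the initial level Z_0, almost surely (1/(n+1)) ∑_{k=0}^{n} Z_k → μ_z as n → ∞, where μ_z = ∑_{i=0}^{C−1} i · π_i. -/

import Mathlib

/-!
Let `g i = i` and `c = π ⬝ᵥ g`. Every `P`-harmonic vector is constant: each state leads down to
`0` through the entries `P i (i - 1) ≥ p 0 > 0`, and a harmonic vector is constant along such
paths out of a maximum. So `range (1 - P)` has codimension one; it is annihilated by `π`, hence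
equals `ker π`, and the Poisson equation `f - P f = g - c` has a solution. Along the chain
`∑_{k ≤ n} (g Z_k - c) = f Z_0 - f Z_{n+1} + M_{n+1}`, where
`M_n = ∑_{k < n} (f Z_{k+1} - (P f) Z_k)` has bounded increments orthogonal to every function of
`Z_0, …, Z_k`, because `Y_k` is independent of them. Expanding `(M_n + D_n)⁴` gives
`E M_n⁴ = O(n²)`, so `∑ E (M_n / n)⁴ < ∞` and `M_n / n → 0` almost surely.
-/

open scoped BigOperators
open MeasureTheory ProbabilityTheory Filter

/-- Transition matrix of the finite-capacity Moran storage chain on states `{0, …, C-1}`: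
`P 0 0 = p 0 + p 1`, `P 0 j = p (j+1)` for `1 ≤ j ≤ C-2`, `P i j = p (j-i+1)` for
`1 ≤ i ≤ C-1` and `i-1 ≤ j ≤ C-2`, `P i j = 0` for `j < i-1`, and
`P i (C-1) = h (C-i)` where `h k = ∑_{j ≥ k} p j`. -/
noncomputable def moranP (C : ℕ) (p : ℕ → ℝ) : Matrix (Fin C) (Fin C) ℝ :=
  Matrix.of fun i j =>
    if (j : ℕ) = C - 1 then ∑' k : ℕ, p (C - (i : ℕ) + k)
    else if (i : ℕ) = 0 ∧ (j : ℕ) = 0 then p 0 + p 1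
    else if (i : ℕ) ≤ (j : ℕ) + 1 then p ((j : ℕ) + 1 - (i : ℕ))
    else 0

open scoped ENNReal Matrix
open Finset Topology

namespace Matrix

variable {S : Type*} [Fintype S] [DecidableEq S] {P : Matrix S S ℝ}

theorem apply_eq_of_mulVec_eq_self_of_reflTransGen (hP : P ∈ rowStochastic ℝ S) {v : S → ℝ}
    (hv : P *ᵥ v = v) {i j : S} (hmax : ∀ k, v k ≤ v i)
    (hij : Relation.ReflTransGen (fun a b => 0 < P a b) i j) : v j = v i := by
  induction hij with
  | refl => rfl
  | @tail b c _ hbc ih =>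
    have hsum : ∑ k, P b k * (v b - v k) = 0 := by
      have hb := congrFun hv b
      simp only [mulVec, dotProduct] at hb
      simp only [mul_sub, sum_sub_distrib, ← sum_mul, sum_row_of_mem_rowStochastic hP, one_mul,
        hb, sub_self]
    have hterm := (sum_eq_zero_iff_of_nonneg fun k _ => mul_nonneg
      (nonneg_of_mem_rowStochastic hP) (sub_nonneg.2 (ih.symm ▸ hmax k))).1 hsum c (mem_univ c)
    rcases mul_eq_zero.1 hterm with h | h
    · exact absurd h hbc.ne'
    · linarith

theorem eq_const_of_mulVec_eq_self (hP : P ∈ rowStochastic ℝ S) {z : S}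
    (hz : ∀ i, Relation.ReflTransGen (fun a b => 0 < P a b) i z) {v : S → ℝ}
    (hv : P *ᵥ v = v) : v = fun _ => v z := by
  obtain ⟨imax, -, himax⟩ := exists_max_image univ v ⟨z, mem_univ _⟩
  obtain ⟨imin, -, himin⟩ := exists_min_image univ v ⟨z, mem_univ _⟩
  have hup := apply_eq_of_mulVec_eq_self_of_reflTransGen hP hv
    (fun k => himax k (mem_univ k)) (hz imax)
  have hdown := apply_eq_of_mulVec_eq_self_of_reflTransGen hP (v := -v) (by rw [mulVec_neg, hv])
    (fun k => neg_le_neg (himin k (mem_univ k))) (hz imin)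
  simp only [Pi.neg_apply, neg_inj] at hdown
  funext i
  linarith [himax i (mem_univ i), himin i (mem_univ i)]

theorem exists_sub_mulVec_eq (hker : ∀ v, P *ᵥ v = v → ∃ c : ℝ, v = fun _ => c) {π : S → ℝ}
    (hπ : π ≠ 0) (hπP : π ᵥ* P = π) {g : S → ℝ} (hg : π ⬝ᵥ g = 0) :
    ∃ f, f - P *ᵥ f = g := by
  let L := mulVecLin (1 - P)
  let ℓ := dotProductBilin ℝ ℝ π
  have hL : ∀ v, L v = v - P *ᵥ v := fun v => by simp [L]
  have hrange : LinearMap.range L ≤ LinearMap.ker ℓ := by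
    rintro _ ⟨v, rfl⟩
    simp [ℓ, hL, dotProduct_sub, dotProduct_mulVec, hπP]
  have hkerL : LinearMap.ker L ≤ Submodule.span ℝ {fun _ => 1} := by
    intro v hv
    obtain ⟨c, rfl⟩ := hker v (by simpa [hL, sub_eq_zero, eq_comm] using hv)
    exact Submodule.mem_span_singleton.2 ⟨c, by funext; simp⟩
  have hkerℓ : LinearMap.ker ℓ ≠ ⊤ := by
    intro htop
    apply hπ
    funext i
    simpa [ℓ] using LinearMap.mem_ker.1 (htop ▸ Submodule.mem_top : Pi.single i 1 ∈ LinearMap.ker ℓ)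
  have hrank := LinearMap.finrank_range_add_finrank_ker L
  have h1 := (Submodule.finrank_mono hkerL).trans
    (finrank_span_le_card ({fun _ => 1} : Set (S → ℝ)))
  have h2 := Submodule.finrank_lt hkerℓ
  simp only [Set.toFinset_singleton, card_singleton] at h1 h2
  have heq : LinearMap.range L = LinearMap.ker ℓ :=
    Submodule.eq_of_le_of_finrank_le hrange (by omega)
  obtain ⟨f, hf⟩ : g ∈ LinearMap.range L := heq ▸ hg
  exact ⟨f, (hL f).symm.trans hf⟩

end Matrix

theorem abs_apply_le_sum_abs {ι : Type*} [Fintype ι] (v : ι → ℝ) (i : ι) :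
    |v i| ≤ ∑ j, |v j| :=
  single_le_sum (f := fun j => |v j|) (fun _ _ => abs_nonneg _) (mem_univ i)

theorem abs_pow_mul_pow_le {x y a b : ℝ} (hx : |x| ≤ a) (hy : |y| ≤ b) (k l : ℕ) :
    |x ^ k * y ^ l| ≤ a ^ k * b ^ l := by
  rw [abs_mul, abs_pow, abs_pow]
  exact mul_le_mul (pow_le_pow_left₀ (abs_nonneg x) hx k) (pow_le_pow_left₀ (abs_nonneg y) hy l)
    (by positivity) (pow_nonneg ((abs_nonneg x).trans hx) k)

theorem abs_sum_range_le {d : ℕ → ℝ} {B : ℝ} (hB : ∀ n, |d n| ≤ B) (n : ℕ) :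
    |∑ k ∈ range n, d k| ≤ B * n := by
  simpa [mul_comm] using (abs_sum_le_sum_abs _ _).trans
    (sum_le_card_nsmul (range n) _ _ fun k _ => hB k)

theorem measurable_of_recursion {Ω : Type*} {m : MeasurableSpace Ω} {Z Y : ℕ → Ω → ℕ}
    {ψ : ℕ → ℕ → ℕ} {n : ℕ} (hZ0 : Measurable[m] (Z 0))
    (hY : ∀ k < n, Measurable[m] (Y k)) (hrec : ∀ k ω, Z (k + 1) ω = ψ (Z k ω) (Y k ω)) :
    ∀ k ≤ n, Measurable[m] (Z k) := by
  intro k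
  induction k with
  | zero => exact fun _ => hZ0
  | succ k ih =>
    intro hk
    rw [show Z (k + 1) = fun ω => ψ (Z k ω) (Y k ω) from funext (hrec k)]
    exact (Measurable.of_discrete (f := fun q : ℕ × ℕ => ψ q.1 q.2)).comp
      ((ih (by omega)).prodMk (hY k (by omega)))

variable {Ω : Type*} [MeasurableSpace Ω] {μ : Measure Ω}

theorem integrable_pow_mul_pow [IsFiniteMeasure μ] {X Y : Ω → ℝ} (hX : Measurable X)
    (hY : Measurable Y) {a b : ℝ} (ha : ∀ ω, |X ω| ≤ a) (hb : ∀ ω, |Y ω| ≤ b) (k l : ℕ) :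
    Integrable (fun ω => X ω ^ k * Y ω ^ l) μ :=
  .of_bound ((hX.pow_const k).mul (hY.pow_const l)).aestronglyMeasurable (a ^ k * b ^ l)
    (ae_of_all _ fun ω => abs_pow_mul_pow_le (ha ω) (hb ω) k l)

theorem integral_le_of_forall_abs_le [IsProbabilityMeasure μ] {X : Ω → ℝ} {c : ℝ}
    (hX : ∀ ω, |X ω| ≤ c) : ∫ ω, X ω ∂μ ≤ c := by
  have := norm_integral_le_of_norm_le_const (μ := μ) (f := X) (ae_of_all _ hX)
  simp only [Real.norm_eq_abs, probReal_univ, mul_one] at this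
  exact (le_abs_self _).trans this

theorem integral_comp_eq_sum_measureReal {S : Type*} [Fintype S] [MeasurableSpace S]
    [MeasurableSingletonClass S] [IsFiniteMeasure μ] {V : Ω → S} (hV : Measurable V) (h : S → ℝ) :
    ∫ ω, h (V ω) ∂μ = ∑ s, μ.real (V ⁻¹' {s}) * h s := by
  rw [← integral_map hV.aemeasurable (.of_discrete), integral_fintype .of_finite]
  simp [map_measureReal_apply hV (measurableSet_singleton _)]

theorem measureReal_setOf_le_eq_tsum [IsFiniteMeasure μ] {W : Ω → ℕ} (hW : Measurable W)
    (m : ℕ) : μ.real {ω | m ≤ W ω} = ∑' k, μ.real {ω | W ω = m + k} := by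
  have hunion : {ω | m ≤ W ω} = ⋃ k, {ω | W ω = m + k} := by
    ext ω
    simp only [Set.mem_ofPred_eq, Set.mem_iUnion]
    exact ⟨fun h => ⟨W ω - m, by omega⟩, fun ⟨k, hk⟩ => by omega⟩
  have hmeas : ∀ k, MeasurableSet {ω | W ω = m + k} := fun k => hW (measurableSet_singleton _)
  have hdisj : Pairwise (Function.onFun Disjoint fun k => {ω | W ω = m + k}) :=
    fun k l hkl => Set.disjoint_left.2 fun ω h1 h2 => hkl (by simp_all)
  rw [measureReal_def, hunion, measure_iUnion hdisj hmeas,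
    ENNReal.tsum_toReal_eq fun k => measure_ne_top μ _]
  rfl

section Independence

variable {α β : Type*} [MeasurableSpace α] [MeasurableSpace β]

theorem ProbabilityTheory.IndepFun.integral_comp_eq_integral_integral [IsFiniteMeasure μ]
    {X : Ω → α} {W : Ω → β} (hXW : IndepFun X W μ) (hX : Measurable X) (hW : Measurable W)
    {g : α → β → ℝ} (hg : Measurable (Function.uncurry g)) {c : ℝ} (hc : ∀ x y, |g x y| ≤ c) :
    ∫ ω, g (X ω) (W ω) ∂μ = ∫ ω, ∫ ω', g (X ω) (W ω') ∂μ ∂μ := by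
  have hmap := (indepFun_iff_map_prod_eq_prod_map_map hX.aemeasurable hW.aemeasurable).1 hXW
  have hint : Integrable (Function.uncurry g) ((μ.map X).prod (μ.map W)) :=
    .of_bound hg.aestronglyMeasurable c (ae_of_all _ fun q => hc q.1 q.2)
  calc ∫ ω, g (X ω) (W ω) ∂μ = ∫ q, Function.uncurry g q ∂(μ.map fun ω => (X ω, W ω)) :=
        (integral_map (hX.prodMk hW).aemeasurable hg.aestronglyMeasurable).symm
    _ = ∫ x, ∫ y, g x y ∂(μ.map W) ∂(μ.map X) := by rw [hmap, integral_prod _ hint]; rfl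
    _ = ∫ ω, ∫ ω', g (X ω) (W ω') ∂μ ∂μ := by
        rw [integral_map (f := fun x => ∫ y, g x y ∂μ.map W) hX.aemeasurable
          hint.integral_prod_left.aestronglyMeasurable]
        exact integral_congr_ae (ae_of_all _ fun ω => integral_map hW.aemeasurable
          (hg.comp measurable_prodMk_left).aestronglyMeasurable)

theorem ProbabilityTheory.iIndepFun.indepFun_of_measurable_iSup {ι γ : Type*}
    [MeasurableSpace γ] {f : ι → Ω → β} (hf : iIndepFun f μ) (hmeas : ∀ i, Measurable (f i))
    {j : ι} {V : Ω → γ}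
    (hV : Measurable[⨆ i ∈ ({j}ᶜ : Set ι), MeasurableSpace.comap (f i) inferInstance] V) :
    IndepFun V (f j) μ := by
  have h := indep_iSup_of_disjoint (fun i => (hmeas i).comap_le) hf.iIndep
    (disjoint_compl_left (a := ({j} : Set ι)))
  simp only [Set.mem_singleton_iff, iSup_iSup_eq_left] at h
  exact (IndepFun_iff_Indep _ _ _).2 (indep_of_indep_of_le_left h hV.comap_le)

end Independence

section Recursion

variable {Z Y : ℕ → Ω → ℕ} {ψ : ℕ → ℕ → ℕ}

theorem ProbabilityTheory.iIndepFun.indepFun_past_of_recursion (hZ0 : Measurable (Z 0))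
    (hY : ∀ n, Measurable (Y n)) (hrec : ∀ n ω, Z (n + 1) ω = ψ (Z n ω) (Y n ω))
    (hIndep : iIndepFun (fun i : Option ℕ => i.elim (Z 0) Y) μ) (n : ℕ) :
    IndepFun (fun ω (k : Fin (n + 1)) => Z k ω) (Y n) μ := by
  set f : Option ℕ → Ω → ℕ := fun i => i.elim (Z 0) Y
  have hle : ∀ i, i ≠ some n → MeasurableSpace.comap (f i) inferInstance
      ≤ ⨆ i ∈ ({some n}ᶜ : Set (Option ℕ)), MeasurableSpace.comap (f i) inferInstance :=
    fun i hi => le_iSup₂ (f := fun i (_ : i ∈ ({some n}ᶜ : Set (Option ℕ))) =>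
      MeasurableSpace.comap (f i) inferInstance) i hi
  have hZ := measurable_of_recursion (n := n) (Measurable.of_comap_le (hle none (by simp)))
    (fun k hk => Measurable.of_comap_le (hle (some k) (by simp; omega))) hrec
  have hpast : ∀ m : MeasurableSpace Ω, (∀ k ≤ n, Measurable[m] (Z k)) →
      Measurable[m] fun ω (k : Fin (n + 1)) => Z k ω := fun m hm =>
    @measurable_pi_lambda _ _ _ m _ _ fun k => hm k (by have := k.isLt; omega)
  exact hIndep.indepFun_of_measurable_iSup (fun i => by cases i with
    | none => exact hZ0
    | some k => exact hY k) (hpast _ hZ)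

end Recursion

section Moments

variable [IsProbabilityMeasure μ] {X Y : Ω → ℝ} {a b : ℝ}

theorem integral_add_sq_le (hX : Measurable X) (hY : Measurable Y) (ha : ∀ ω, |X ω| ≤ a)
    (hb : ∀ ω, |Y ω| ≤ b) (horth : ∫ ω, X ω * Y ω ∂μ = 0) :
    ∫ ω, (X ω + Y ω) ^ 2 ∂μ ≤ ∫ ω, X ω ^ 2 ∂μ + b ^ 2 := by
  have hI := integrable_pow_mul_pow (μ := μ) hX hY ha hb
  have hX2 : Integrable (fun ω => X ω ^ 2) μ := by simpa using hI 2 0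
  have hXY : Integrable (fun ω => X ω * Y ω) μ := by simpa using hI 1 1
  have hY2 : Integrable (fun ω => Y ω ^ 2) μ := by simpa using hI 0 2
  have hsplit : ∫ ω, (X ω + Y ω) ^ 2 ∂μ
      = ∫ ω, X ω ^ 2 ∂μ + 2 * ∫ ω, X ω * Y ω ∂μ + ∫ ω, Y ω ^ 2 ∂μ := by
    rw [← integral_const_mul, ← integral_add hX2 (hXY.const_mul 2),
      ← integral_add (f := fun ω => X ω ^ 2 + 2 * (X ω * Y ω)) (hX2.add (hXY.const_mul 2)) hY2]
    congr 1; ext ω; ring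
  have hY2b := integral_le_of_forall_abs_le (μ := μ) fun ω => abs_pow_mul_pow_le (ha ω) (hb ω) 0 2
  simp only [pow_zero, one_mul] at hY2b
  rw [hsplit, horth]
  linarith

theorem integral_add_pow_four_le (hX : Measurable X) (hY : Measurable Y) (ha : ∀ ω, |X ω| ≤ a)
    (hb : ∀ ω, |Y ω| ≤ b) (horth : ∫ ω, X ω ^ 3 * Y ω ∂μ = 0) :
    ∫ ω, (X ω + Y ω) ^ 4 ∂μ
      ≤ ∫ ω, X ω ^ 4 ∂μ + 6 * b ^ 2 * ∫ ω, X ω ^ 2 ∂μ + (4 * a * b ^ 3 + b ^ 4) := by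
  have hI := integrable_pow_mul_pow (μ := μ) hX hY ha hb
  have hX4 : Integrable (fun ω => X ω ^ 4) μ := by simpa using hI 4 0
  have hX2 : Integrable (fun ω => X ω ^ 2) μ := by simpa using hI 2 0
  have hX3Y : Integrable (fun ω => X ω ^ 3 * Y ω) μ := by simpa using hI 3 1
  have hXY3 : Integrable (fun ω => X ω * Y ω ^ 3) μ := by simpa using hI 1 3
  have hY4 : Integrable (fun ω => Y ω ^ 4) μ := by simpa using hI 0 4
  have hrest : Integrable (fun ω => 6 * (X ω ^ 2 * Y ω ^ 2) + 4 * (X ω * Y ω ^ 3) + Y ω ^ 4) μ :=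
    (((hI 2 2).const_mul 6).add (hXY3.const_mul 4)).add hY4
  have hsplit : ∫ ω, (X ω + Y ω) ^ 4 ∂μ = ∫ ω, X ω ^ 4 ∂μ + 4 * ∫ ω, X ω ^ 3 * Y ω ∂μ
      + ∫ ω, 6 * (X ω ^ 2 * Y ω ^ 2) + 4 * (X ω * Y ω ^ 3) + Y ω ^ 4 ∂μ := by
    rw [← integral_const_mul, ← integral_add hX4 (hX3Y.const_mul 4),
      ← integral_add (f := fun ω => X ω ^ 4 + 4 * (X ω ^ 3 * Y ω))
        (hX4.add (hX3Y.const_mul 4)) hrest]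
    congr 1; ext ω; ring
  have hbound : ∫ ω, 6 * (X ω ^ 2 * Y ω ^ 2) + 4 * (X ω * Y ω ^ 3) + Y ω ^ 4 ∂μ
      ≤ ∫ ω, 6 * b ^ 2 * X ω ^ 2 + (4 * a * b ^ 3 + b ^ 4) ∂μ := by
    refine integral_mono hrest ((hX2.const_mul _).add (integrable_const _)) fun ω => ?_
    have h02 := abs_pow_mul_pow_le (ha ω) (hb ω) 0 2
    have h13 := abs_pow_mul_pow_le (ha ω) (hb ω) 1 3
    have h04 := abs_pow_mul_pow_le (ha ω) (hb ω) 0 4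
    simp only [pow_zero, pow_one, one_mul] at h02 h13 h04
    have h1 := (le_abs_self _).trans h13
    have h2 := (le_abs_self _).trans h04
    have h3 : X ω ^ 2 * Y ω ^ 2 ≤ b ^ 2 * X ω ^ 2 := by
      rw [mul_comm]; exact mul_le_mul_of_nonneg_right ((le_abs_self _).trans h02) (sq_nonneg _)
    dsimp only
    linarith
  rw [integral_add (hX2.const_mul _) (integrable_const _), integral_const_mul] at hbound
  simp only [integral_const, probReal_univ, one_smul] at hbound
  rw [hsplit, horth]
  linarith

variable {D : ℕ → Ω → ℝ} {B : ℝ}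

theorem integral_sq_sum_range_le (hD : ∀ n, Measurable (D n)) (hB : ∀ n ω, |D n ω| ≤ B)
    (horth : ∀ n, ∫ ω, (∑ k ∈ range n, D k ω) * D n ω ∂μ = 0) (n : ℕ) :
    ∫ ω, (∑ k ∈ range n, D k ω) ^ 2 ∂μ ≤ B ^ 2 * n := by
  induction n with
  | zero => simp
  | succ n ih =>
    simp only [sum_range_succ]
    have := integral_add_sq_le (Finset.measurable_sum _ fun k _ => hD k) (hD n)
      (fun ω => abs_sum_range_le (fun k => hB k ω) n) (hB n) (horth n)
    push_cast
    linarith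

theorem integral_pow_four_sum_range_le (hD : ∀ n, Measurable (D n)) (hB : ∀ n ω, |D n ω| ≤ B)
    (horth₁ : ∀ n, ∫ ω, (∑ k ∈ range n, D k ω) * D n ω ∂μ = 0)
    (horth₃ : ∀ n, ∫ ω, (∑ k ∈ range n, D k ω) ^ 3 * D n ω ∂μ = 0) (n : ℕ) :
    ∫ ω, (∑ k ∈ range n, D k ω) ^ 4 ∂μ ≤ 11 * B ^ 4 * n ^ 2 := by
  induction n with
  | zero => simp
  | succ n ih =>
    simp only [sum_range_succ]
    have hstep := integral_add_pow_four_le (Finset.measurable_sum _ fun k _ => hD k) (hD n)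
      (fun ω => abs_sum_range_le (fun k => hB k ω) n) (hB n) (horth₃ n)
    have h2 := mul_le_mul_of_nonneg_left (integral_sq_sum_range_le hD hB horth₁ n)
      (by positivity : (0 : ℝ) ≤ 6 * B ^ 2)
    have hB4 : 0 ≤ B ^ 4 := by positivity
    push_cast
    nlinarith [mul_nonneg hB4 (Nat.cast_nonneg (α := ℝ) n)]

end Moments

theorem ae_tendsto_div_atTop_zero_of_integral_pow_four_le {M : ℕ → Ω → ℝ}
    (hM : ∀ n, Integrable (fun ω => M n ω ^ 4) μ) {K : ℝ}
    (hK : ∀ n, ∫ ω, M n ω ^ 4 ∂μ ≤ K * n ^ 2) :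
    ∀ᵐ ω ∂μ, Tendsto (fun n => M n ω / n) atTop (𝓝 0) := by
  have hu_eq : ∀ n ω, |M n ω / n| ^ 4 = M n ω ^ 4 / (n : ℝ) ^ 4 := fun n ω => by
    rw [(by decide : Even 4).pow_abs, div_pow]
  have hu : ∀ n, Integrable (fun ω => |M n ω / n| ^ 4) μ := fun n => by
    simpa only [hu_eq] using (hM n).div_const _
  have hK0 : 0 ≤ K := by simpa using (integral_nonneg fun ω => by positivity).trans (hK 1)
  have hu_le : ∀ n, ∫ ω, |M n ω / n| ^ 4 ∂μ ≤ K / (n : ℝ) ^ 2 := by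
    intro n
    simp only [hu_eq, integral_div]
    rcases Nat.eq_zero_or_pos n with rfl | hn
    · simp
    · have hn' : (0 : ℝ) < n := Nat.cast_pos.2 hn
      rw [div_le_div_iff₀ (by positivity) (by positivity)]
      nlinarith [hK n, pow_pos hn' 2]
  have hsum : Summable fun n : ℕ => K / (n : ℝ) ^ 2 := by
    simpa only [div_eq_mul_inv] using (Real.summable_nat_pow_inv.2 one_lt_two).mul_left K
  have hmeas : ∀ n, AEMeasurable (fun ω => ENNReal.ofReal (|M n ω / n| ^ 4)) μ :=
    fun n => (hu n).aemeasurable.ennreal_ofReal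
  have hfin : ∫⁻ ω, ∑' n, ENNReal.ofReal (|M n ω / n| ^ 4) ∂μ ≠ ∞ := by
    rw [lintegral_tsum hmeas]
    refine ne_top_of_le_ne_top (b := ∑' n : ℕ, ENNReal.ofReal (K / (n : ℝ) ^ 2)) ?_
      (ENNReal.tsum_le_tsum fun n => ?_)
    · rw [← ENNReal.ofReal_tsum_of_nonneg (fun n => by positivity) hsum]
      exact ENNReal.ofReal_ne_top
    · rw [← ofReal_integral_eq_lintegral_ofReal (hu n) (ae_of_all _ fun ω => by positivity)]
      exact ENNReal.ofReal_le_ofReal (hu_le n)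
  filter_upwards [ae_lt_top' (AEMeasurable.tsum hmeas) hfin] with ω hω
  have h4 : Tendsto (fun n => |M n ω / n| ^ 4) atTop (𝓝 0) := by
    have := (ENNReal.tendsto_toReal ENNReal.zero_ne_top).comp
      (ENNReal.tendsto_atTop_zero_of_tsum_ne_top hω.ne)
    simpa [Function.comp_def, ENNReal.toReal_ofReal (by positivity : (0 : ℝ) ≤ _)] using this
  have h1 := h4.rpow_const (p := ((4 : ℕ) : ℝ)⁻¹) (Or.inr (by positivity))
  simp only [Real.pow_rpow_inv_natCast (abs_nonneg _) four_ne_zero] at h1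
  rw [Real.zero_rpow (by positivity)] at h1
  exact (tendsto_zero_iff_abs_tendsto_zero _).2 h1

theorem ae_tendsto_sum_range_div_atTop_zero [IsProbabilityMeasure μ] {D : ℕ → Ω → ℝ} {B : ℝ}
    (hD : ∀ n, Measurable (D n)) (hB : ∀ n ω, |D n ω| ≤ B)
    (horth₁ : ∀ n, ∫ ω, (∑ k ∈ range n, D k ω) * D n ω ∂μ = 0)
    (horth₃ : ∀ n, ∫ ω, (∑ k ∈ range n, D k ω) ^ 3 * D n ω ∂μ = 0) :
    ∀ᵐ ω ∂μ, Tendsto (fun n => (∑ k ∈ range n, D k ω) / n) atTop (𝓝 0) := by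
  refine ae_tendsto_div_atTop_zero_of_integral_pow_four_le (fun n => ?_)
    (integral_pow_four_sum_range_le hD hB horth₁ horth₃)
  have hS := fun ω => abs_sum_range_le (fun k => hB k ω) n
  simpa using integrable_pow_mul_pow (μ := μ) (Finset.measurable_sum _ fun k _ => hD k)
    (Finset.measurable_sum _ fun k _ => hD k) hS hS 4 0

section MarkovChain

variable {S : Type*} [Fintype S] [MeasurableSpace S] [MeasurableSingletonClass S]
  [IsProbabilityMeasure μ] {P : Matrix S S ℝ} {X : ℕ → Ω → S}

theorem ae_tendsto_time_average_of_sub_mulVec_eq (hX : ∀ n, Measurable (X n))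
    (hMarkov : ∀ n (G : (Fin (n + 1) → S) → ℝ) (h : S → ℝ),
      ∫ ω, G (fun k => X k ω) * (h (X (n + 1) ω) - (P *ᵥ h) (X n ω)) ∂μ = 0)
    {g f : S → ℝ} {c : ℝ} (hf : f - P *ᵥ f = g - fun _ => c) :
    ∀ᵐ ω ∂μ, Tendsto (fun n : ℕ => (∑ k ∈ range (n + 1), g (X k ω)) / (n + 1)) atTop (𝓝 c) := by
  set D : ℕ → Ω → ℝ := fun k ω => f (X (k + 1) ω) - (P *ᵥ f) (X k ω)
  have hDB : ∀ k ω, |D k ω| ≤ ∑ i, |f i| + ∑ i, |(P *ᵥ f) i| := fun k ω =>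
    (abs_sub _ _).trans (add_le_add (abs_apply_le_sum_abs f _) (abs_apply_le_sum_abs _ _))
  have hDmeas : ∀ k, Measurable (D k) := fun k =>
    ((Measurable.of_discrete (f := f)).comp (hX (k + 1))).sub
      ((Measurable.of_discrete (f := P *ᵥ f)).comp (hX k))
  have horth : ∀ m n, ∫ ω, (∑ k ∈ range n, D k ω) ^ m * D n ω ∂μ = 0 := fun m n => by
    simp only [← Fin.sum_univ_eq_sum_range (fun k => D k _) n]
    exact hMarkov n (fun x => (∑ k : Fin n, (f (x k.succ) - (P *ᵥ f) (x k.castSucc))) ^ m) f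
  have htel : ∀ n ω, ∑ k ∈ range (n + 1), g (X k ω)
      = (n + 1) * c + (f (X 0 ω) - f (X (n + 1) ω)) + ∑ k ∈ range (n + 1), D k ω := fun n ω => by
    have hg : ∀ k, g (X k ω) = c + (f (X k ω) - (P *ᵥ f) (X k ω)) := fun k => by
      have := congrFun hf (X k ω)
      simp only [Pi.sub_apply] at this
      linarith
    simp only [hg, sum_add_distrib, sum_const, card_range, nsmul_eq_mul, D, sum_sub_distrib,
      sum_range_succ' (fun k => f (X k ω)), sum_range_succ (fun k => f (X (k + 1) ω))]
    push_cast
    ring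
  filter_upwards [ae_tendsto_sum_range_div_atTop_zero hDmeas hDB (by simpa using horth 1)
    (horth 3)] with ω hω
  have hmart : Tendsto (fun n : ℕ => (∑ k ∈ range (n + 1), D k ω) / ((n : ℝ) + 1)) atTop
      (𝓝 0) := by
    simpa [Function.comp_def] using hω.comp (tendsto_add_atTop_nat 1)
  have hbdry : Tendsto (fun n : ℕ => (f (X 0 ω) - f (X (n + 1) ω)) / ((n : ℝ) + 1)) atTop
      (𝓝 0) := by
    refine squeeze_zero_norm (fun n => ?_) ((tendsto_const_div_atTop_nhds_zero_nat
      (2 * ∑ i, |f i|)).comp (tendsto_add_atTop_nat 1))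
    have hn : (0 : ℝ) < n + 1 := by positivity
    rw [Real.norm_eq_abs, abs_div, abs_of_pos hn, Function.comp_apply, Nat.cast_add_one]
    gcongr
    linarith [abs_sub (f (X 0 ω)) (f (X (n + 1) ω)), abs_apply_le_sum_abs f (X 0 ω),
      abs_apply_le_sum_abs f (X (n + 1) ω)]
  refine ((hbdry.add hmart).const_add c |>.congr fun n => ?_).trans (by simp)
  rw [htel]
  field_simp
  ring

theorem ae_tendsto_time_average_of_markov [DecidableEq S] (hP : P ∈ Matrix.rowStochastic ℝ S) {z : S}
    (hz : ∀ i, Relation.ReflTransGen (fun a b => 0 < P a b) i z) {π : S → ℝ}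
    (hπ1 : ∑ i, π i = 1) (hπP : π ᵥ* P = π) (hX : ∀ n, Measurable (X n))
    (hMarkov : ∀ n (G : (Fin (n + 1) → S) → ℝ) (h : S → ℝ),
      ∫ ω, G (fun k => X k ω) * (h (X (n + 1) ω) - (P *ᵥ h) (X n ω)) ∂μ = 0)
    (g : S → ℝ) :
    ∀ᵐ ω ∂μ, Tendsto (fun n : ℕ => (∑ k ∈ range (n + 1), g (X k ω)) / (n + 1)) atTop
      (𝓝 (π ⬝ᵥ g)) := by
  have hπ : π ≠ 0 := fun h => by simp [h] at hπ1
  have hcentered : π ⬝ᵥ (g - fun _ => π ⬝ᵥ g) = 0 := by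
    rw [dotProduct_sub]
    simp only [dotProduct, ← sum_mul, hπ1, one_mul, sub_self]
  obtain ⟨f, hf⟩ := Matrix.exists_sub_mulVec_eq
    (fun v hv => ⟨v z, Matrix.eq_const_of_mulVec_eq_self hP hz hv⟩) hπ hπP hcentered
  exact ae_tendsto_time_average_of_sub_mulVec_eq hX hMarkov hf

end MarkovChain

section RandomDynamicalSystem

variable {S β : Type*} [Fintype S] [MeasurableSpace S]
  [MeasurableSingletonClass S] [MeasurableSpace β] [MeasurableSingletonClass β] [Countable β]

theorem integral_mul_sub_mulVec_eq_zero [IsProbabilityMeasure μ] {φ : S → β → S}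
    {P : Matrix S S ℝ} {X : ℕ → Ω → S} {Y : ℕ → Ω → β} (hX : ∀ n, Measurable (X n))
    (hY : ∀ n, Measurable (Y n)) (hrec : ∀ n ω, X (n + 1) ω = φ (X n ω) (Y n ω))
    (hlaw : ∀ n z w, μ.real {ω | φ z (Y n ω) = w} = P z w)
    (hindep : ∀ n, IndepFun (fun ω (k : Fin (n + 1)) => X k ω) (Y n) μ)
    (n : ℕ) (G : (Fin (n + 1) → S) → ℝ) (h : S → ℝ) :
    ∫ ω, G (fun k => X k ω) * (h (X (n + 1) ω) - (P *ᵥ h) (X n ω)) ∂μ = 0 := by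
  set g : (Fin (n + 1) → S) → β → ℝ := fun x y =>
    G x * (h (φ (x (Fin.last n)) y) - (P *ᵥ h) (x (Fin.last n)))
  have hbound : ∀ x y, |g x y| ≤ (∑ x, |G x|) * (∑ s, |h s| + ∑ s, |(P *ᵥ h) s|) := fun x y => by
    rw [abs_mul]
    exact mul_le_mul (abs_apply_le_sum_abs G x) ((abs_sub _ _).trans
      (add_le_add (abs_apply_le_sum_abs h _) (abs_apply_le_sum_abs _ _))) (abs_nonneg _)
      (sum_nonneg fun _ _ => abs_nonneg _)
  have hφY : ∀ z, Measurable fun ω => φ z (Y n ω) := fun z =>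
    (Measurable.of_discrete (f := φ z)).comp (hY n)
  have hmean : ∀ z, ∫ ω, h (φ z (Y n ω)) ∂μ = (P *ᵥ h) z := fun z => by
    rw [integral_comp_eq_sum_measureReal (hφY z)]
    simp only [Matrix.mulVec, dotProduct, Set.preimage, Set.mem_singleton_iff, hlaw]
  have hinner : ∀ x, ∫ ω', g x (Y n ω') ∂μ = 0 := fun x => by
    have hint : Integrable (fun ω' => h (φ (x (Fin.last n)) (Y n ω'))) μ :=
      .of_bound ((Measurable.of_discrete (f := h)).comp (hφY _)).aestronglyMeasurable (∑ s, |h s|)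
        (ae_of_all _ fun ω' => abs_apply_le_sum_abs h _)
    simp only [g, integral_const_mul, integral_sub hint (integrable_const _), integral_const,
      hmean, probReal_univ, one_smul, sub_self, mul_zero]
  calc ∫ ω, G (fun k => X k ω) * (h (X (n + 1) ω) - (P *ᵥ h) (X n ω)) ∂μ
      = ∫ ω, g (fun k => X k ω) (Y n ω) ∂μ := by simp only [g, hrec, Fin.val_last]
    _ = ∫ ω, ∫ ω', g (fun k => X k ω) (Y n ω') ∂μ ∂μ :=
        (hindep n).integral_comp_eq_integral_integral (measurable_pi_lambda _ fun k => hX k)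
          (hY n) .of_discrete hbound
    _ = 0 := by simp only [hinner, integral_zero]

end RandomDynamicalSystem

section Moran

variable {C : ℕ} {p : ℕ → ℝ}

theorem moranP_pos_pred (hC : 2 ≤ C) (hp : ∀ j, 0 ≤ p j) (hp0 : 0 < p 0) (i : Fin C) :
    0 < moranP C p i ⟨i - 1, lt_of_le_of_lt (Nat.sub_le _ _) i.isLt⟩ := by
  have hi := i.isLt
  simp only [moranP, Matrix.of_apply]
  split_ifs with hlast h00 hle
  · omega
  · linarith [hp 1]
  · rwa [show (i : ℕ) - 1 + 1 - i = 0 by omega]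
  · omega

variable [NeZero C]

-- Truncated subtraction in `ℕ` supplies the `max (·, 0)` of the storage recursion.
def moranStep (z : Fin C) (y : ℕ) : Fin C :=
  ⟨min (z + y - 1) (C - 1), by have := NeZero.pos C; omega⟩

theorem moranStep_ofNat {z : ℕ} (hz : z < C) (y : ℕ) :
    moranStep (Fin.ofNat C z) y = Fin.ofNat C (min (z + y - 1) (C - 1)) := by
  have := NeZero.pos C
  ext
  simp only [moranStep, Fin.val_ofNat, Nat.mod_eq_of_lt hz]
  rw [Nat.mod_eq_of_lt (by omega)]

variable [IsProbabilityMeasure μ] {W : Ω → ℕ}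

theorem measureReal_moranStep_eq (hC : 2 ≤ C) (hW : Measurable W)
    (hWp : ∀ j, μ.real {ω | W ω = j} = p j) (z w : Fin C) :
    μ.real {ω | moranStep z (W ω) = w} = moranP C p z w := by
  have hz := z.isLt
  have hw := w.isLt
  simp only [moranP, Matrix.of_apply, moranStep, Fin.ext_iff]
  split_ifs with hlast h00 hle
  · rw [show {ω | min (z + W ω - 1) (C - 1) = (w : ℕ)} = {ω | C - z ≤ W ω} by ext; simp; omega,
      measureReal_setOf_le_eq_tsum hW]
    simp only [hWp]
  · have hdisj : Disjoint {ω | W ω = 0} {ω | W ω = 1} :=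
      Set.disjoint_left.2 fun ω h0 h1 => by simp_all
    rw [show {ω | min (z + W ω - 1) (C - 1) = (w : ℕ)} = {ω | W ω = 0} ∪ {ω | W ω = 1} by
        ext; simp; omega,
      measureReal_union hdisj (hW (measurableSet_singleton 1)), hWp, hWp]
  · rw [show {ω | min (z + W ω - 1) (C - 1) = (w : ℕ)} = {ω | W ω = w + 1 - z} by
      ext; simp; omega, hWp]
  · rw [show {ω | min (z + W ω - 1) (C - 1) = (w : ℕ)} = ∅ by ext; simp; omega, measureReal_empty]

theorem moranP_mem_rowStochastic (hC : 2 ≤ C) (hW : Measurable W)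
    (hWp : ∀ j, μ.real {ω | W ω = j} = p j) :
    moranP C p ∈ Matrix.rowStochastic ℝ (Fin C) := by
  refine Matrix.mem_rowStochastic_iff_sum.2 ⟨fun z w => ?_, fun z => ?_⟩
  · rw [← measureReal_moranStep_eq hC hW hWp]
    exact measureReal_nonneg
  · simp only [← measureReal_moranStep_eq hC hW hWp]
    exact (sum_measureReal_preimage_singleton (μ := μ) (f := fun ω => moranStep z (W ω)) univ
      fun w _ => ((Measurable.of_discrete (f := moranStep z)).comp hW) (measurableSet_singleton w)
      ).trans (by simp)

theorem reflTransGen_moranP_zero (hC : 2 ≤ C) (hp : ∀ j, 0 ≤ p j) (hp0 : 0 < p 0) (i : Fin C) :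
    Relation.ReflTransGen (fun a b => 0 < moranP C p a b) i 0 := by
  obtain ⟨n, hn⟩ := i
  induction n with
  | zero => rfl
  | succ n ih => exact .head (moranP_pos_pred hC hp hp0 ⟨n + 1, hn⟩) (ih (by omega))

end Moran

theorem stmt4_general
    {Ω : Type} [MeasurableSpace Ω] (μ : Measure Ω) [IsProbabilityMeasure μ]
    (C : ℕ) (hC : 2 ≤ C) (p : ℕ → ℝ) (hpnn : ∀ j, 0 ≤ p j)
    (Y Z : ℕ → Ω → ℕ)
    (hYmeas : ∀ n, Measurable (Y n)) (hZ0meas : Measurable (Z 0))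
    (hYdist : ∀ n j, (μ {ω | Y n ω = j}).toReal = p j)
    (hIndep : iIndepFun
      (fun i : Option ℕ => i.elim (Z 0) Y) μ)
    (hZ0lt : ∀ ω, Z 0 ω < C)
    (hrec : ∀ n ω, Z (n + 1) ω = min (Z n ω + Y n ω - 1) (C - 1))
    (hp0 : 0 < p 0)
    (π : Fin C → ℝ) (hπ1 : ∑ i, π i = 1)
    (hπP : Matrix.vecMul π (moranP C p) = π) :
    ∀ᵐ ω ∂μ, Tendsto
      (fun n => (∑ k ∈ Finset.range (n + 1), (Z k ω : ℝ)) / (n + 1))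
      atTop (nhds (∑ i : Fin C, (i : ℝ) * π i)) := by
  have : NeZero C := ⟨by omega⟩
  have hZlt : ∀ n ω, Z n ω < C := fun n => by
    induction n with
    | zero => exact hZ0lt
    | succ n _ => intro ω; rw [hrec]; omega
  set X : ℕ → Ω → Fin C := fun n ω => Fin.ofNat C (Z n ω)
  have hX : ∀ n ω, (X n ω : ℕ) = Z n ω := fun n ω => by
    rw [Fin.val_ofNat, Nat.mod_eq_of_lt (hZlt n ω)]
  have hXmeas : ∀ n, Measurable (X n) := fun n =>
    (Measurable.of_discrete (f := Fin.ofNat C)).comp (measurable_of_recursion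
      (ψ := fun z y => min (z + y - 1) (C - 1)) hZ0meas (fun k _ => hYmeas k) hrec n le_rfl)
  have hXrec : ∀ n ω, X (n + 1) ω = moranStep (X n ω) (Y n ω) := fun n ω => by
    simp only [X, hrec, moranStep_ofNat (hZlt n ω)]
  have hMarkov := integral_mul_sub_mulVec_eq_zero hXmeas hYmeas hXrec
    (fun n => measureReal_moranStep_eq hC (hYmeas n) (hYdist n))
    (fun n => (hIndep.indepFun_past_of_recursion (ψ := fun z y => min (z + y - 1) (C - 1))
      hZ0meas hYmeas hrec n).comp
      (Measurable.of_discrete (f := fun (x : Fin (n + 1) → ℕ) k => Fin.ofNat C (x k)))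
      measurable_id)
  filter_upwards [ae_tendsto_time_average_of_markov
    (moranP_mem_rowStochastic hC (hYmeas 0) (hYdist 0)) (reflTransGen_moranP_zero hC hpnn hp0)
    hπ1 hπP hXmeas hMarkov (fun i => (i : ℝ))] with ω hω
  simpa only [hX, dotProduct, mul_comm] using hω

/-- strong law of large numbers for the storage volume in the finite-capacity
case: the time averages of the storage level converge almost surely to the stationary mean
`μ_z = ∑ i, i · π i`, for any distribution of the initial level. -/
theorem stmt4
    {Ω : Type} [MeasurableSpace Ω] (μ : Measure Ω) [IsProbabilityMeasure μ]
    (C : ℕ) (hC : 2 ≤ C) (p : ℕ → ℝ) (hpnn : ∀ j, 0 ≤ p j) (hpsum : HasSum p 1)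
    (Y Z : ℕ → Ω → ℕ)
    (hYmeas : ∀ n, Measurable (Y n)) (hZ0meas : Measurable (Z 0))
    (hYdist : ∀ n j, (μ {ω | Y n ω = j}).toReal = p j)
    (hIndep : iIndepFun
      (fun i : Option ℕ => i.elim (Z 0) Y) μ)
    (hZ0lt : ∀ ω, Z 0 ω < C)
    (hrec : ∀ n ω, Z (n + 1) ω = min (Z n ω + Y n ω - 1) (C - 1))
    (hp0 : 0 < p 0) (hp01 : p 0 + p 1 < 1)
    (π : Fin C → ℝ) (hπnn : ∀ i, 0 ≤ π i) (hπ1 : ∑ i, π i = 1)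
    (hπP : Matrix.vecMul π (moranP C p) = π) :
    ∀ᵐ ω ∂μ, Tendsto
      (fun n => (∑ k ∈ Finset.range (n + 1), (Z k ω : ℝ)) / (n + 1))
      atTop (nhds (∑ i : Fin C, (i : ℝ) * π i)) :=
  stmt4_general μ C hC p hpnn Y Z hYmeas hZ0meas hYdist hIndep hZ0lt hrec hp0 π hπ1 hπP
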